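/- arXiv:2010.03829 — 2 statements merged into one kernel-verified Lean document; each statement's English description precedes it below -/
import Mathlib

section
/- If X(G1) and X(G2) are pure n-dimensional, (n+1)-partite, strongly gallery connected clique complexes, then the clique complex of the partite product G1 ⊛ G2 is again a pure n-dimensional, (n+1)-partite, strongly gallery connected clique complex; in particular G1 ⊛ G2 is connected. -/
/-- The common neighborhood (link vertex set) of a set of vertices. -/
def commonNbrs {V : Type*} (G : SimpleGraph V) (s : Set V) : Set V :=
  {v | ∀ u ∈ s, G.Adj u v}

/-- The partite product of two partite graphs. -/
def partiteProd {V1 V2 : Type*} {nn : ℕ} (t1 : V1 → Fin nn) (t2 : V2 → Fin nn)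
    (G1 : SimpleGraph V1) (G2 : SimpleGraph V2) :
    SimpleGraph {p : V1 × V2 // t1 p.1 = t2 p.2} where
  Adj x y := G1.Adj x.val.1 y.val.1 ∧ G2.Adj x.val.2 y.val.2
  symm := ⟨fun _ _ h => ⟨h.1.symm, h.2.symm⟩⟩
  loopless := ⟨fun _ h => G1.loopless.irrefl _ h.1⟩

/-- The clique complex of `G` is pure `n`-dimensional: every clique is contained in a clique of
size `n + 1`. -/
def IsPure {V : Type*} (G : SimpleGraph V) (n : ℕ) : Prop :=
  ∀ s : Finset V, G.IsClique (s : Set V) →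
    ∃ t : Finset V, s ⊆ t ∧ G.IsClique (t : Set V) ∧ t.card = n + 1

/-- The clique complex of `G` (of dimension `n`) is strongly gallery connected: `G` is connected
and the 1-skeleton of the link of every face of dimension at most `n - 2` (i.e. every clique of
size at most `n - 1`, including the empty one) is connected. -/
def StronglyGalleryConnected {V : Type*} (G : SimpleGraph V) (n : ℕ) : Prop :=
  G.Connected ∧
  ∀ s : Finset V, G.IsClique (s : Set V) → s.card ≤ n - 1 →
    (G.induce (commonNbrs G (s : Set V))).Connected

/-!
Both the connectivity of `G1 ⊛ G2` and that of its links rest on one extension property, which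
purity provides: every clique has a common neighbour of each colour it misses. A walk in `G1` is
then shadowed in `G2` one step at a time, after which the second coordinate is moved along a walk
in `G2` while the first stays in the closed neighbourhood of the target. The link of a clique `s`
of `G1 ⊛ G2` is the partite product of the links of its two projections, and these links inherit
the extension property, so the same argument shows that it is connected.
-/

/-- Only the colours in the range of `t'` (those of the other factor) need to be extendable. -/
def CliqueExtension {V V' κ : Type*} (G : SimpleGraph V) (t : V → κ) (t' : V' → κ) : Prop :=
  ∀ u : Finset V, G.IsClique (u : Set V) → ∀ y : V', (∀ v ∈ u, t v ≠ t' y) →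
    ∃ w, t w = t' y ∧ ∀ v ∈ u, G.Adj v w

section Pure

variable {V : Type*} {n : ℕ} {t : V → Fin (n + 1)} {G : SimpleGraph V}

lemma exists_rainbow_clique_of_isPure (hp : ∀ a b, G.Adj a b → t a ≠ t b) (hpure : IsPure G n)
    {s : Finset V} (hs : G.IsClique (s : Set V)) :
    ∃ f : Fin (n + 1) → V,
      Function.LeftInverse t f ∧ G.IsClique (Set.range f) ∧ ∀ v ∈ s, f (t v) = v := by
  classical
  obtain ⟨T, hsT, hT, hcard⟩ := hpure s hs
  have hinj : Set.InjOn t T := fun x hx y hy hxy => by_contra fun hne => hp x y (hT hx hy hne) hxy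
  have himage : T.image t = Finset.univ := Finset.eq_univ_of_card _ <| by
    rw [Finset.card_image_of_injOn hinj, hcard, Fintype.card_fin]
  have hsurj : ∀ c, ∃ v ∈ T, t v = c := fun c => Finset.mem_image.mp (himage ▸ Finset.mem_univ c)
  choose f hfT hft using hsurj
  refine ⟨f, hft, hT.subset (Set.range_subset_iff.mpr hfT), fun v hv => ?_⟩
  exact hinj (hfT _) (hsT hv) (hft _)

lemma cliqueExtension_of_isPure {V' : Type*} (t' : V' → Fin (n + 1))
    (hp : ∀ a b, G.Adj a b → t a ≠ t b) (hpure : IsPure G n) : CliqueExtension G t t' := by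
  intro u hu y hy
  obtain ⟨f, hft, hf, hfu⟩ := exists_rainbow_clique_of_isPure hp hpure hu
  refine ⟨f (t' y), hft _, fun v hv => ?_⟩
  rw [← hfu v hv]
  exact hf (Set.mem_range_self _) (Set.mem_range_self _) (hft.injective.ne (hy v hv))

end Pure

lemma cliqueExtension_induce_commonNbrs {V V' κ : Type*} {G : SimpleGraph V} {t : V → κ}
    {t' : V' → κ} (hext : CliqueExtension G t t') {s : Finset V} (hs : G.IsClique (s : Set V))
    (havoid : ∀ y, ∀ v ∈ s, t v ≠ t' y) :
    CliqueExtension (G.induce (commonNbrs G s)) (fun v => t v) t' := by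
  classical
  intro u hu y hy
  have hclique : G.IsClique ((s ∪ u.map (Function.Embedding.subtype _) : Finset V) : Set V) := by
    rintro x hx z hz hxz
    simp only [Finset.coe_union, Finset.coe_map, Function.Embedding.coe_subtype, Set.mem_union,
      Set.mem_image, Finset.mem_coe] at hx hz
    rcases hx with hx | ⟨x, hx, rfl⟩ <;> rcases hz with hz | ⟨z, hz, rfl⟩
    · exact hs hx hz hxz
    · exact z.2 x hx
    · exact (x.2 z hz).symm
    · exact hu hx hz (ne_of_apply_ne Subtype.val hxz)
  obtain ⟨w, hwt, hw⟩ := hext _ hclique y <| by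
    simp only [Finset.mem_union, Finset.mem_map, Function.Embedding.coe_subtype]
    rintro v (hv | ⟨v, hv, rfl⟩)
    exacts [havoid y v hv, hy v hv]
  exact ⟨⟨w, fun v hv => hw v (Finset.mem_union_left _ hv)⟩, hwt,
    fun v hv => hw v (Finset.mem_union_right _ (Finset.mem_map_of_mem _ hv))⟩

section Product

variable {V1 V2 : Type*} {N : ℕ} {t1 : V1 → Fin N} {t2 : V2 → Fin N}
  {G1 : SimpleGraph V1} {G2 : SimpleGraph V2}

lemma exists_reachable_of_walk_fst (hp1 : ∀ a b, G1.Adj a b → t1 a ≠ t1 b)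
    (hext2 : CliqueExtension G2 t2 t1) {a a' : V1} (w : G1.Walk a a') (b : V2)
    (hb : t1 a = t2 b) :
    ∃ b' : V2, ∃ hb' : t1 a' = t2 b',
      (partiteProd t1 t2 G1 G2).Reachable ⟨(a, b), hb⟩ ⟨(a', b'), hb'⟩ := by
  induction w generalizing b with
  | nil => exact ⟨b, hb, .rfl⟩
  | @cons a a₁ a' h _ ih =>
    obtain ⟨b₁, hb₁, hadj⟩ := hext2 {b} (by simp) a₁ (by simpa [← hb] using hp1 a a₁ h)
    obtain ⟨b', hb', hr⟩ := ih b₁ hb₁.symm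
    have hedge : (partiteProd t1 t2 G1 G2).Adj ⟨(a, b), hb⟩ ⟨(a₁, b₁), hb₁.symm⟩ :=
      ⟨h, hadj b (Finset.mem_singleton_self b)⟩
    exact ⟨b', hb', hedge.reachable.trans hr⟩

lemma reachable_of_walk_snd (hp1 : ∀ a b, G1.Adj a b → t1 a ≠ t1 b)
    (hp2 : ∀ a b, G2.Adj a b → t2 a ≠ t2 b) (hext1 : CliqueExtension G1 t1 t2) (a' : V1)
    {x y : V2} (w : G2.Walk x y) (u : V1) (hu : u = a' ∨ G1.Adj a' u) (hux : t1 u = t2 x)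
    (hy : t1 a' = t2 y) :
    (partiteProd t1 t2 G1 G2).Reachable ⟨(u, x), hux⟩ ⟨(a', y), hy⟩ := by
  classical
  induction w generalizing u with
  | nil =>
    obtain rfl : u = a' := hu.resolve_right fun h => hp1 a' u h (hy.trans hux.symm)
    rfl
  | @cons x x₁ y h _ ih =>
    by_cases hcol : t2 x₁ = t1 a'
    · have hadj : G1.Adj a' u := hu.resolve_left fun hua => hp2 x x₁ h (by rw [← hux, hua, hcol])
      have hedge : (partiteProd t1 t2 G1 G2).Adj ⟨(u, x), hux⟩ ⟨(a', x₁), hcol.symm⟩ :=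
        ⟨hadj.symm, h⟩
      exact hedge.reachable.trans (ih a' (.inl rfl) hcol.symm hy)
    · have hclique : G1.IsClique (({a', u} : Finset V1) : Set V1) := by
        rw [Finset.coe_pair, SimpleGraph.isClique_pair]
        exact fun hne => hu.resolve_left hne.symm
      obtain ⟨u₁, hu₁, hadj⟩ := hext1 {a', u} hclique x₁ <| by
        simp only [Finset.mem_insert, Finset.mem_singleton]
        rintro v (rfl | rfl)
        exacts [Ne.symm hcol, hux ▸ hp2 x x₁ h]
      have hedge : (partiteProd t1 t2 G1 G2).Adj ⟨(u, x), hux⟩ ⟨(u₁, x₁), hu₁⟩ :=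
        ⟨hadj u (by simp), h⟩
      exact hedge.reachable.trans (ih u₁ (.inr (hadj a' (by simp))) hu₁ hy)

lemma partiteProd_connected (hp1 : ∀ a b, G1.Adj a b → t1 a ≠ t1 b)
    (hp2 : ∀ a b, G2.Adj a b → t2 a ≠ t2 b) (hext1 : CliqueExtension G1 t1 t2)
    (hext2 : CliqueExtension G2 t2 t1) (hc1 : G1.Connected) (hc2 : G2.Connected) :
    (partiteProd t1 t2 G1 G2).Connected := by
  rw [SimpleGraph.connected_iff]
  constructor
  · rintro ⟨⟨a, b⟩, hab⟩ ⟨⟨a', b'⟩, hab'⟩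
    obtain ⟨b₀, hb₀, hr⟩ :=
      exists_reachable_of_walk_fst hp1 hext2 (hc1.preconnected a a').some b hab
    exact hr.trans (reachable_of_walk_snd hp1 hp2 hext1 a' (hc2.preconnected b₀ b').some a'
      (.inl rfl) hb₀ hab')
  · obtain ⟨a⟩ := hc1.nonempty
    obtain ⟨b, hb, -⟩ := hext2 ∅ (by simp) a (by simp)
    exact ⟨⟨(a, b), hb.symm⟩⟩

variable {s : Finset {p : V1 × V2 // t1 p.1 = t2 p.2}}

lemma isClique_image_fst [DecidableEq V1] (hs : (partiteProd t1 t2 G1 G2).IsClique (s : Set _)) :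
    G1.IsClique ((s.image fun p => p.val.1 : Finset V1) : Set V1) := by
  rw [Finset.coe_image]
  rintro _ ⟨p, hp, rfl⟩ _ ⟨q, hq, rfl⟩ hpq
  exact (hs hp hq fun h => hpq (h ▸ rfl)).1

lemma isClique_image_snd [DecidableEq V2] (hs : (partiteProd t1 t2 G1 G2).IsClique (s : Set _)) :
    G2.IsClique ((s.image fun p => p.val.2 : Finset V2) : Set V2) := by
  rw [Finset.coe_image]
  rintro _ ⟨p, hp, rfl⟩ _ ⟨q, hq, rfl⟩ hpq
  exact (hs hp hq fun h => hpq (h ▸ rfl)).2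

lemma mem_commonNbrs_partiteProd [DecidableEq V1] [DecidableEq V2]
    {x : {p : V1 × V2 // t1 p.1 = t2 p.2}} :
    x ∈ commonNbrs (partiteProd t1 t2 G1 G2) s ↔
      x.val.1 ∈ commonNbrs G1 (s.image fun p => p.val.1 : Finset V1) ∧
        x.val.2 ∈ commonNbrs G2 (s.image fun p => p.val.2 : Finset V2) := by
  simp only [commonNbrs, Set.mem_ofPred_eq, Finset.coe_image, Set.forall_mem_image,
    Finset.mem_coe, partiteProd]
  exact ⟨fun h => ⟨fun p hp => (h p hp).1, fun p hp => (h p hp).2⟩,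
    fun h p hp => ⟨h.1 hp, h.2 hp⟩⟩

/-- The link of `s` in `G1 ⊛ G2` is the product of the links of the two projections of `s`. -/
lemma connected_induce_commonNbrs_partiteProd [DecidableEq V1] [DecidableEq V2]
    (h : (partiteProd (fun v : commonNbrs G1 (s.image fun p => p.val.1 : Finset V1) => t1 v)
      (fun v : commonNbrs G2 (s.image fun p => p.val.2 : Finset V2) => t2 v)
      (G1.induce _) (G2.induce _)).Connected) :
    ((partiteProd t1 t2 G1 G2).induce (commonNbrs (partiteProd t1 t2 G1 G2) s)).Connected := by
  let f : partiteProd (fun v : commonNbrs G1 (s.image fun p => p.val.1 : Finset V1) => t1 v)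
      (fun v : commonNbrs G2 (s.image fun p => p.val.2 : Finset V2) => t2 v)
      (G1.induce _) (G2.induce _) →g
      (partiteProd t1 t2 G1 G2).induce (commonNbrs (partiteProd t1 t2 G1 G2) s) :=
    { toFun := fun q => ⟨⟨(q.val.1, q.val.2), q.property⟩,
        mem_commonNbrs_partiteProd.mpr ⟨q.val.1.property, q.val.2.property⟩⟩
      map_rel' := fun h => ⟨h.1, h.2⟩ }
  refine h.map f ?_
  rintro ⟨⟨⟨x1, x2⟩, hx⟩, hmem⟩
  obtain ⟨hx1, hx2⟩ := mem_commonNbrs_partiteProd.mp hmem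
  exact ⟨⟨(⟨x1, hx1⟩, ⟨x2, hx2⟩), hx⟩, rfl⟩

end Product

section PureProduct

variable {V1 V2 : Type*} {n : ℕ} {t1 : V1 → Fin (n + 1)} {t2 : V2 → Fin (n + 1)}
  {G1 : SimpleGraph V1} {G2 : SimpleGraph V2}

lemma partiteProd_isPure (hp1 : ∀ a b, G1.Adj a b → t1 a ≠ t1 b)
    (hp2 : ∀ a b, G2.Adj a b → t2 a ≠ t2 b) (hpure1 : IsPure G1 n) (hpure2 : IsPure G2 n) :
    IsPure (partiteProd t1 t2 G1 G2) n := by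
  classical
  intro s hs
  obtain ⟨f1, hf1t, hf1, hf1s⟩ := exists_rainbow_clique_of_isPure hp1 hpure1 (isClique_image_fst hs)
  obtain ⟨f2, hf2t, hf2, hf2s⟩ := exists_rainbow_clique_of_isPure hp2 hpure2 (isClique_image_snd hs)
  let g : Fin (n + 1) → {p : V1 × V2 // t1 p.1 = t2 p.2} :=
    fun c => ⟨(f1 c, f2 c), by rw [hf1t, hf2t]⟩
  have hg : Function.Injective g := fun c d h => hf1t.injective (congrArg (fun p => p.val.1) h)
  refine ⟨Finset.univ.image g, fun p hp => ?_, ?_, ?_⟩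
  · refine Finset.mem_image.mpr ⟨t1 p.val.1, Finset.mem_univ _, Subtype.ext (Prod.ext ?_ ?_)⟩
    · exact hf1s _ (Finset.mem_image_of_mem _ hp)
    · rw [p.property]
      exact hf2s _ (Finset.mem_image_of_mem _ hp)
  · rw [Finset.coe_image, Finset.coe_univ, Set.image_univ]
    rintro _ ⟨c, rfl⟩ _ ⟨d, rfl⟩ hcd
    have hcd : c ≠ d := fun h => hcd (h ▸ rfl)
    exact ⟨hf1 (Set.mem_range_self c) (Set.mem_range_self d) (hf1t.injective.ne hcd),
      hf2 (Set.mem_range_self c) (Set.mem_range_self d) (hf2t.injective.ne hcd)⟩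
  · rw [Finset.card_image_of_injective _ hg, Finset.card_univ, Fintype.card_fin]

lemma partiteProd_connected_induce_commonNbrs (hp1 : ∀ a b, G1.Adj a b → t1 a ≠ t1 b)
    (hp2 : ∀ a b, G2.Adj a b → t2 a ≠ t2 b) (hpure1 : IsPure G1 n) (hpure2 : IsPure G2 n)
    (hsgc1 : StronglyGalleryConnected G1 n) (hsgc2 : StronglyGalleryConnected G2 n)
    {s : Finset {p : V1 × V2 // t1 p.1 = t2 p.2}}
    (hs : (partiteProd t1 t2 G1 G2).IsClique (s : Set _)) (hcard : s.card ≤ n - 1) :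
    ((partiteProd t1 t2 G1 G2).induce
      (commonNbrs (partiteProd t1 t2 G1 G2) (s : Set _))).Connected := by
  classical
  set s1 := s.image fun p => p.val.1
  set s2 := s.image fun p => p.val.2
  have havoid1 : ∀ y : commonNbrs G2 (s2 : Set V2), ∀ v ∈ s1, t1 v ≠ t2 y := by
    intro y v hv
    obtain ⟨p, hp, rfl⟩ := Finset.mem_image.mp hv
    rw [p.property]
    exact hp2 _ _ (y.property _ (Finset.mem_image_of_mem _ hp))
  have havoid2 : ∀ y : commonNbrs G1 (s1 : Set V1), ∀ v ∈ s2, t2 v ≠ t1 y := by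
    intro y v hv
    obtain ⟨p, hp, rfl⟩ := Finset.mem_image.mp hv
    rw [← p.property]
    exact hp1 _ _ (y.property _ (Finset.mem_image_of_mem _ hp))
  refine connected_induce_commonNbrs_partiteProd (partiteProd_connected
    (fun a b h => hp1 a b h) (fun a b h => hp2 a b h) ?_ ?_
    (hsgc1.2 s1 (isClique_image_fst hs) (Finset.card_image_le.trans hcard))
    (hsgc2.2 s2 (isClique_image_snd hs) (Finset.card_image_le.trans hcard)))
  · exact cliqueExtension_induce_commonNbrs (cliqueExtension_of_isPure _ hp1 hpure1)
      (isClique_image_fst hs) havoid1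
  · exact cliqueExtension_induce_commonNbrs (cliqueExtension_of_isPure _ hp2 hpure2)
      (isClique_image_snd hs) havoid2

end PureProduct

/-- If `X(G1)` and `X(G2)` are pure `n`-dimensional, `(n+1)`-partite, strongly gallery connected
clique complexes, then so is the clique complex of the partite product `G1 ⊛ G2`; in particular
`G1 ⊛ G2` is connected. -/
theorem stmt3 {V1 V2 : Type*} (n : ℕ) (t1 : V1 → Fin (n + 1)) (t2 : V2 → Fin (n + 1))
    (G1 : SimpleGraph V1) (G2 : SimpleGraph V2)
    (hp1 : ∀ a b, G1.Adj a b → t1 a ≠ t1 b) (hp2 : ∀ a b, G2.Adj a b → t2 a ≠ t2 b)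
    (hpure1 : IsPure G1 n) (hpure2 : IsPure G2 n)
    (hsgc1 : StronglyGalleryConnected G1 n) (hsgc2 : StronglyGalleryConnected G2 n) :
    (∀ x y, (partiteProd t1 t2 G1 G2).Adj x y → t1 x.val.1 ≠ t1 y.val.1) ∧
    IsPure (partiteProd t1 t2 G1 G2) n ∧
    StronglyGalleryConnected (partiteProd t1 t2 G1 G2) n ∧
    (partiteProd t1 t2 G1 G2).Connected := by
  have hconn : (partiteProd t1 t2 G1 G2).Connected :=
    partiteProd_connected hp1 hp2 (cliqueExtension_of_isPure t2 hp1 hpure1)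
      (cliqueExtension_of_isPure t1 hp2 hpure2) hsgc1.1 hsgc2.1
  exact ⟨fun x y h => hp1 _ _ h.1, partiteProd_isPure hp1 hp2 hpure1 hpure2,
    ⟨hconn, fun s hs hcard =>
      partiteProd_connected_induce_commonNbrs hp1 hp2 hpure1 hpure2 hsgc1 hsgc2 hs hcard⟩, hconn⟩
end

section
/- The bipartite partite product of two connected bipartite graphs G1, G2, each of which is pure (every vertex lies in an edge), is connected. -/
/-- The bipartite product of two connected bipartite graphs, each of which is pure (no isolated
vertices), is connected. -/
theorem stmt4 {V1 V2 : Type*} (t1 : V1 → Fin 2) (t2 : V2 → Fin 2)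
    (G1 : SimpleGraph V1) (G2 : SimpleGraph V2)
    (hb1 : ∀ a b, G1.Adj a b → t1 a ≠ t1 b) (hb2 : ∀ a b, G2.Adj a b → t2 a ≠ t2 b)
    (hc1 : G1.Connected) (hc2 : G2.Connected)
    (hpure1 : ∀ v, ∃ u, G1.Adj v u) (hpure2 : ∀ v, ∃ u, G2.Adj v u) :
    (partiteProd t1 t2 G1 G2).Connected := by
  have fin2 : ∀ a b c : Fin 2, a ≠ b → c ≠ b → a = c := by decide
  set P := partiteProd t1 t2 G1 G2 with hP
  have lemA : ∀ {a1 b1 : V1} (_ : G1.Walk a1 b1) {x2 : V2} (h : t1 a1 = t2 x2),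
      ∃ (y2 : V2) (h' : t1 b1 = t2 y2), P.Reachable ⟨(a1, x2), h⟩ ⟨(b1, y2), h'⟩ := by
    intro a1 b1 w
    induction w with
    | nil => intro x2 h; exact ⟨x2, h, SimpleGraph.Reachable.refl _⟩
    | @cons u v b hadj w ih =>
      intro x2 h
      obtain ⟨y, hy⟩ := hpure2 x2
      have hvy : t1 v = t2 y := by
        refine fin2 _ (t2 x2) _ ?_ (Ne.symm (hb2 _ _ hy))
        rw [← h]; exact (hb1 _ _ hadj).symm
      obtain ⟨z, h', hr⟩ := ih hvy
      exact ⟨z, h', (SimpleGraph.Adj.reachable (show P.Adj ⟨(u, x2), h⟩ ⟨(v, y), hvy⟩ from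
        ⟨hadj, hy⟩)).trans hr⟩
  have lemB : ∀ {x2 z2 : V2} (_ : G2.Walk x2 z2) (c d : V1) (_ : G1.Adj c d)
      (h : t1 c = t2 x2), ∃ e : {p : V1 × V2 // t1 p.1 = t2 p.2},
      P.Reachable ⟨(c, x2), h⟩ e ∧ e.val.2 = z2 ∧ (e.val.1 = c ∨ e.val.1 = d) := by
    intro x2 z2 w
    induction w with
    | nil => intro c d hcd h; exact ⟨⟨(c, _), h⟩, SimpleGraph.Reachable.refl _, rfl, Or.inl rfl⟩
    | @cons u v z hadj w ih =>
      intro c d hcd h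
      have hdm : t1 d = t2 v := by
        refine fin2 _ (t2 u) _ ?_ (Ne.symm (hb2 _ _ hadj))
        rw [← h]; exact (hb1 _ _ hcd).symm
      obtain ⟨e, hr, h2, h1⟩ := ih d c hcd.symm hdm
      exact ⟨e, (SimpleGraph.Adj.reachable (show P.Adj ⟨(c, u), h⟩ ⟨(d, v), hdm⟩ from
        ⟨hcd, hadj⟩)).trans hr, h2, h1.symm⟩
  rw [SimpleGraph.connected_iff]
  constructor
  · rintro ⟨⟨a1, a2⟩, ha⟩ ⟨⟨b1, b2⟩, hb⟩
    obtain ⟨w1⟩ := hc1.preconnected a1 b1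
    obtain ⟨y2, h', hr1⟩ := lemA w1 ha
    obtain ⟨d, hd⟩ := hpure1 b1
    obtain ⟨w2⟩ := hc2.preconnected y2 b2
    obtain ⟨e, hr2, h2, h1⟩ := lemB w2 b1 d hd h'
    have he1 : e.val.1 = b1 := by
      rcases h1 with h1 | h1
      · exact h1
      · exfalso
        have := e.prop
        rw [h1, h2] at this
        exact hb1 _ _ hd (hb.trans this.symm)
    have : e = ⟨(b1, b2), hb⟩ := Subtype.ext (Prod.ext he1 h2)
    exact hr1.trans (this ▸ hr2)
  · obtain ⟨v⟩ := hc1.nonempty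
    obtain ⟨w⟩ := hc2.nonempty
    by_cases h : t1 v = t2 w
    · exact ⟨⟨(v, w), h⟩⟩
    · obtain ⟨u, hu⟩ := hpure1 v
      refine ⟨⟨(u, w), ?_⟩⟩
      exact fin2 _ (t1 v) _ (Ne.symm (hb1 _ _ hu)) (fun he => h he.symm)
end
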